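/- arXiv:0811.4032 — 6 statements merged into one kernel-verified Lean document; each statement's English description precedes it below -/
import Mathlib

section
/- Let p ≥ 2. Every matrix U ∈ SL(p,ℤ) with all column sums odd can be written as U = K·D, where K belongs to the subgroup of SL(p,ℤ) generated by the matrices R_{ij}² (for all i ≠ j), Q_{ij} (for all i ≠ j), and R_{ik}R_{jk} (for all mutually distinct i, j, k), and D is a diagonal matrix whose diagonal entries are all ±1 (necessarily with an even number of −1 entries, since det D = 1). -/
/-!
`U` is reduced to a diagonal matrix by left multiplication with the group generated by the
`R_{ij}²`, `Q_{ij}` and `R_{ik} R_{jk}`, one column at a time. Every generator changes the sum of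
the entries of a vector by an even amount, so the column being reduced keeps an odd sum. Once the
columns in a set `s` are `±e_c`, the entries of the next column `κ` outside `s` have gcd `1`
(`U` is invertible), and a Euclidean algorithm whose steps subtract even multiples of rows
(`R_{ij}^{2t}`) produces an entry `±1`, which `Q` moves to position `κ`. As the column sum and
the pivot are odd, the odd entries off the pivot come in pairs, which `R_{iκ} R_{jκ}` makes even;
even entries are then cleared by `R_{iκ}^{2t}`. None of these operations touch the columns in `s`.
-/

open Matrix

/-- `Rm p i j h` is the matrix `R_{ij} = I + E_{ij}` (where `E_{ij}` has a single nonzero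
entry `1` at position `(i,j)`), as an element of `SL(p, ℤ)`. -/
def Rm (p : ℕ) (i j : Fin p) (h : i ≠ j) : Matrix.SpecialLinearGroup (Fin p) ℤ :=
  ⟨1 + Matrix.single i j 1, by
    simpa [Matrix.transvection] using Matrix.det_transvection_of_ne i j h (1 : ℤ)⟩

/-- `Qm p i j h` is the matrix `Q_{ij} = R_{ij}⁻¹ R_{ji} R_{ij}⁻¹` in `SL(p, ℤ)`. -/
def Qm (p : ℕ) (i j : Fin p) (h : i ≠ j) : Matrix.SpecialLinearGroup (Fin p) ℤ :=
  (Rm p i j h)⁻¹ * Rm p j i h.symm * (Rm p i j h)⁻¹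

lemma Subgroup.exists_smul_of_descent {G α : Type*} [Group G] [MulAction G α] (W : Subgroup G)
    (P Q : α → Prop) (μ : α → ℕ)
    (step : ∀ a, P a → ¬ Q a → ∃ g ∈ W, P (g • a) ∧ μ (g • a) < μ a) (a : α) (ha : P a) :
    ∃ g ∈ W, P (g • a) ∧ Q (g • a) := by
  induction hn : μ a using Nat.strong_induction_on generalizing a with
  | _ n ih =>
    by_cases hQ : Q a
    · exact ⟨1, W.one_mem, by simpa using ha, by simpa using hQ⟩
    obtain ⟨g, hg, hPg, hlt⟩ := step a ha hQ
    obtain ⟨g', hg', hP', hQ'⟩ := ih _ (hn ▸ hlt) (g • a) hPg rfl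
    exact ⟨g' * g, W.mul_mem hg' hg, by rwa [mul_smul], by rwa [mul_smul]⟩

lemma Int.exists_add_two_mul_natAbs_lt {a b : ℤ} (ha : a ≠ 0) (hab : ¬ a ∣ b) :
    ∃ t : ℤ, b + 2 * t * a ≠ 0 ∧ (b + 2 * t * a).natAbs < a.natAbs := by
  have hm : 0 < 2 * a.natAbs := by omega
  have hlo := Int.le_bmod (x := b) hm
  have hhi := Int.bmod_lt (x := b) hm
  obtain ⟨t, ht⟩ : 2 * a ∣ b - b.bmod (2 * a.natAbs) := by
    rw [← Int.natAbs_dvd, Int.natAbs_mul]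
    exact_mod_cast Int.ModEq.dvd Int.bmod_emod
  refine ⟨-t, ?_⟩
  have hr : b + 2 * -t * a = b.bmod (2 * a.natAbs) := by linarith
  have hndvd : ¬ a ∣ b + 2 * -t * a := fun h => hab <| by
    simpa using h.sub (Dvd.intro_left (2 * -t) rfl)
  have h0 : b + 2 * -t * a ≠ 0 := fun h => hndvd (h ▸ dvd_zero a)
  have hneg : b + 2 * -t * a ≠ -a.natAbs := fun h =>
    hndvd (h ▸ (Int.dvd_natAbs.2 dvd_rfl).neg_right)
  have hpos : b + 2 * -t * a ≠ a.natAbs := fun h => hndvd (h ▸ Int.dvd_natAbs.2 dvd_rfl)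
  rw [← hr] at hlo hhi
  simp only [Nat.cast_mul, Nat.cast_ofNat] at hlo hhi
  omega

lemma Int.exists_odd_apply_of_odd_sum {ι : Type*} [Fintype ι] [DecidableEq ι] {w : ι → ℤ}
    (hsum : Odd (∑ r, w r)) {i κ : ι} (hiκ : i ≠ κ) (hi : Odd (w i)) (hκ : Odd (w κ)) :
    ∃ j, j ≠ i ∧ j ≠ κ ∧ Odd (w j) := by
  by_contra! h
  have hrest : Even (∑ r ∈ (Finset.univ.erase i).erase κ, w r) :=
    Finset.even_sum _ fun r hr => by
      simp only [Finset.mem_erase] at hr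
      exact Int.not_odd_iff_even.1 (h r hr.2.1 hr.1)
  rw [← Finset.add_sum_erase _ _ (Finset.mem_univ i),
    ← Finset.add_sum_erase _ _ (Finset.mem_erase.2 ⟨hiκ.symm, Finset.mem_univ κ⟩)] at hsum
  exact Int.not_even_iff_odd.2 hsum (hi.add_odd (hκ.add_even hrest))

-- Pairing two odd entries (weight `2` each) makes both even, and clearing an even entry
-- lowers its weight from `1` to `0`.
def parityWeight (x : ℤ) : ℕ := if x = 0 then 0 else if Even x then 1 else 2

lemma parityWeight_zero : parityWeight 0 = 0 := rfl

lemma parityWeight_pos {x : ℤ} (hx : x ≠ 0) : 0 < parityWeight x := by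
  unfold parityWeight; split_ifs <;> omega

lemma parityWeight_lt_of_even_of_odd {x y : ℤ} (hy : Even y) (hx : Odd x) :
    parityWeight y < parityWeight x := by
  have hx0 : x ≠ 0 := by rintro rfl; simp at hx
  unfold parityWeight; simp [hy, hx0, Int.not_even_iff_odd.2 hx]; split_ifs <;> omega

def IsPrimitiveOn {ι R : Type*} [Monoid R] (s : Set ι) (v : ι → R) : Prop :=
  ∀ d : R, (∀ i ∈ s, d ∣ v i) → IsUnit d

lemma isPrimitiveOn_compl_single {ι R : Type*} [DecidableEq ι] [CommMonoidWithZero R]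
    {s : Set ι} {κ : ι} (hκ : κ ∉ s) : IsPrimitiveOn sᶜ (Pi.single κ (1 : R)) := fun d hd =>
  isUnit_of_dvd_one (by simpa using hd κ hκ)

namespace Matrix.SpecialLinearGroup

variable {ι R : Type*} [Fintype ι] [DecidableEq ι] [CommRing R]

lemma transvection_smul {i j : ι} (hij : i ≠ j) (b : R) (v : ι → R) :
    transvection hij b • v = v + Pi.single i (b * v j) := by
  simp [SpecialLinearGroup.smul_def, transvection_coe, add_mulVec, single_mulVec]
  rfl

lemma smul_single_one_apply (g : SpecialLinearGroup ι R) (i c : ι) :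
    (g • (Pi.single c 1 : ι → R)) i = g i c := by
  simp [SpecialLinearGroup.smul_def]

def unitColumns (s : Set ι) : Subgroup (SpecialLinearGroup ι R) where
  carrier := {g | ∀ c ∈ s, ∃ ε : Rˣ, g • (Pi.single c 1 : ι → R) = (ε : R) • Pi.single c 1}
  one_mem' c _ := ⟨1, by simp⟩
  mul_mem' {g h} hg hh c hc := by
    obtain ⟨ε, hε⟩ := hg c hc
    obtain ⟨δ, hδ⟩ := hh c hc
    exact ⟨δ * ε, by rw [mul_smul, hδ, smul_comm, hε, smul_smul, Units.val_mul]⟩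
  inv_mem' {g} hg c hc := by
    obtain ⟨ε, hε⟩ := hg c hc
    refine ⟨ε⁻¹, ?_⟩
    calc g⁻¹ • (Pi.single c 1 : ι → R)
        = ((ε⁻¹ : Rˣ) : R) • g⁻¹ • ((ε : R) • Pi.single c 1) := by
          rw [smul_comm g⁻¹ (ε : R), smul_smul, ← Units.val_mul, inv_mul_cancel, Units.val_one,
            one_smul]
      _ = ((ε⁻¹ : Rˣ) : R) • Pi.single c 1 := by rw [← hε, inv_smul_smul]

lemma apply_eq_zero_of_mem_unitColumns {s : Set ι} {g : SpecialLinearGroup ι R}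
    (hg : g ∈ unitColumns s) {i c : ι} (hc : c ∈ s) (hic : i ≠ c) : g i c = 0 := by
  obtain ⟨ε, hε⟩ := hg c hc
  simpa [smul_single_one_apply, hic] using congrFun hε i

lemma isUnit_apply_self_of_mem_unitColumns {s : Set ι} {g : SpecialLinearGroup ι R}
    (hg : g ∈ unitColumns s) {c : ι} (hc : c ∈ s) : IsUnit (g c c) := by
  obtain ⟨ε, hε⟩ := hg c hc
  rw [← smul_single_one_apply, hε]
  simp

lemma transvection_mem_unitColumns {s : Set ι} {i j : ι} (hij : i ≠ j) (b : R) (hj : j ∉ s) :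
    transvection hij b ∈ unitColumns s := fun c hc =>
  ⟨1, by simp [transvection_smul, show j ≠ c by rintro rfl; exact hj hc]⟩

lemma dvd_smul_apply_of_mem_unitColumns {s : Set ι} {g : SpecialLinearGroup ι R}
    (hg : g ∈ unitColumns s) {d : R} {v : ι → R} (hv : ∀ i ∉ s, d ∣ v i) {i : ι} (hi : i ∉ s) :
    d ∣ (g • v) i := by
  change d ∣ ∑ l, g i l * v l
  refine Finset.dvd_sum fun l _ => ?_
  by_cases hl : l ∈ s
  · rw [apply_eq_zero_of_mem_unitColumns hg hl (by rintro rfl; exact hi hl), zero_mul]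
    exact dvd_zero d
  · exact (hv l hl).mul_left _

lemma IsPrimitiveOn.smul {s : Set ι} {g : SpecialLinearGroup ι R} {v : ι → R}
    (hv : IsPrimitiveOn sᶜ v) (hg : g ∈ unitColumns s) : IsPrimitiveOn sᶜ (g • v) := fun d hd =>
  hv d fun i hi => by
    simpa using dvd_smul_apply_of_mem_unitColumns (inv_mem hg) (v := g • v) hd hi

def sumParityStabilizer (ι : Type*) [Fintype ι] [DecidableEq ι] :
    Subgroup (SpecialLinearGroup ι ℤ) where
  carrier := {g | ∀ v : ι → ℤ, ∑ i, (g • v) i ≡ ∑ i, v i [ZMOD 2]}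
  one_mem' v := by rw [one_smul]
  mul_mem' {g h} hg hh v := by rw [mul_smul]; exact (hg _).trans (hh v)
  inv_mem' {g} hg v := by simpa using (hg (g⁻¹ • v)).symm

lemma odd_sum_smul_of_mem_sumParityStabilizer {g : SpecialLinearGroup ι ℤ}
    (hg : g ∈ sumParityStabilizer ι) {v : ι → ℤ} (hv : Odd (∑ i, v i)) : Odd (∑ i, (g • v) i) :=
  Int.odd_iff.2 (Eq.trans (hg v) (Int.odd_iff.1 hv))

end Matrix.SpecialLinearGroup

open Matrix.SpecialLinearGroup

variable {p : ℕ}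

lemma Rm_eq_transvection {i j : Fin p} (h : i ≠ j) : Rm p i j h = transvection h 1 := rfl

lemma Qm_smul {i j : Fin p} (h : i ≠ j) (v : Fin p → ℤ) :
    Qm p i j h • v = v + Pi.single i (-v i - v j) + Pi.single j (v i - v j) := by
  ext r
  simp [Qm, mul_smul, Rm_eq_transvection, transvection_inv, transvection_smul, Pi.single_apply]
  grind

lemma Rm_mul_Rm_smul {i j k : Fin p} (hik : i ≠ k) (hjk : j ≠ k) (v : Fin p → ℤ) :
    (Rm p i k hik * Rm p j k hjk) • v = v + Pi.single i (v k) + Pi.single j (v k) := by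
  ext r
  simp [mul_smul, Rm_eq_transvection, transvection_smul, Pi.single_apply, hjk.symm]

def reductionGenerators (p : ℕ) : Set (Matrix.SpecialLinearGroup (Fin p) ℤ) :=
  {A | ∃ (i j : Fin p) (h : i ≠ j), A = Rm p i j h ^ 2 ∨ A = Qm p i j h} ∪
    {A | ∃ (i j k : Fin p) (hik : i ≠ k) (hjk : j ≠ k), i ≠ j ∧ A = Rm p i k hik * Rm p j k hjk}

def reductionGroup (p : ℕ) : Subgroup (Matrix.SpecialLinearGroup (Fin p) ℤ) :=
  Subgroup.closure (reductionGenerators p)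

lemma transvection_two_mul_mem_reductionGroup {i j : Fin p} (h : i ≠ j) (t : ℤ) :
    transvection h (2 * t) ∈ reductionGroup p := by
  have h2 : transvection h 2 ∈ reductionGroup p := by
    refine Subgroup.subset_closure (Or.inl ⟨i, j, h, Or.inl ?_⟩)
    rw [sq, Rm_eq_transvection, ← transvection_add, one_add_one_eq_two]
  induction t using Int.induction_on with
  | zero => simp [one_mem]
  | succ n ih => rw [mul_add, mul_one, transvection_add]; exact mul_mem ih h2
  | pred n ih =>
    rw [mul_sub, mul_one, sub_eq_add_neg, transvection_add, ← transvection_inv]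
    exact mul_mem ih (inv_mem h2)

lemma Qm_mem_reductionGroup {i j : Fin p} (h : i ≠ j) : Qm p i j h ∈ reductionGroup p :=
  Subgroup.subset_closure (Or.inl ⟨i, j, h, Or.inr rfl⟩)

lemma Rm_mul_Rm_mem_reductionGroup {i j k : Fin p} (hij : i ≠ j) (hik : i ≠ k) (hjk : j ≠ k) :
    Rm p i k hik * Rm p j k hjk ∈ reductionGroup p :=
  Subgroup.subset_closure (Or.inr ⟨i, j, k, hik, hjk, hij, rfl⟩)

lemma reductionGroup_le_sumParityStabilizer : reductionGroup p ≤ sumParityStabilizer (Fin p) := by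
  refine Subgroup.closure_le _ |>.2 ?_
  rintro A (⟨i, j, h, rfl | rfl⟩ | ⟨i, j, k, hik, hjk, -, rfl⟩) v
  · rw [sq, Rm_eq_transvection, ← transvection_add]
    simp [transvection_smul, Finset.sum_add_distrib, Int.ModEq]
  · simp [Qm_smul, Finset.sum_add_distrib, Int.ModEq]
    omega
  · simp [Rm_mul_Rm_smul, Finset.sum_add_distrib, Int.ModEq]
    omega

lemma Qm_mem_unitColumns {s : Set (Fin p)} {i j : Fin p} (h : i ≠ j) (hi : i ∉ s) (hj : j ∉ s) :
    Qm p i j h ∈ unitColumns s := by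
  simp only [Qm, Rm_eq_transvection]
  have := transvection_mem_unitColumns h (1 : ℤ) hj
  exact mul_mem (mul_mem (inv_mem this) (transvection_mem_unitColumns h.symm 1 hi)) (inv_mem this)

lemma Rm_mul_Rm_mem_unitColumns {s : Set (Fin p)} {i j k : Fin p} (hik : i ≠ k) (hjk : j ≠ k)
    (hk : k ∉ s) : Rm p i k hik * Rm p j k hjk ∈ unitColumns s :=
  mul_mem (transvection_mem_unitColumns hik 1 hk) (transvection_mem_unitColumns hjk 1 hk)

noncomputable def minNatAbsOn {ι : Type*} (t : Set ι) (w : ι → ℤ) : ℕ :=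
  sInf ((fun i => (w i).natAbs) '' {i | i ∈ t ∧ w i ≠ 0})

section ColumnReduction

variable {s : Set (Fin p)}

lemma exists_smul_minNatAbsOn_lt {w : Fin p → ℤ} (hw : IsPrimitiveOn sᶜ w)
    (hnot : ∀ a ∉ s, ¬ IsUnit (w a)) :
    ∃ g ∈ reductionGroup p ⊓ unitColumns s, minNatAbsOn sᶜ (g • w) < minNatAbsOn sᶜ w := by
  have hne : ∃ i ∉ s, w i ≠ 0 := by
    by_contra! h0
    exact not_isUnit_zero (hw 0 fun i hi => by rw [h0 i hi])
  obtain ⟨a, ⟨has, ha0⟩, hmin⟩ := Nat.sInf_mem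
    (s := (fun i => (w i).natAbs) '' {i | i ∈ sᶜ ∧ w i ≠ 0}) (hne.elim fun i hi => ⟨_, i, hi, rfl⟩)
  obtain ⟨j, hjs, hndvd⟩ : ∃ j ∉ s, ¬ w a ∣ w j := by
    by_contra! h
    exact hnot a has (hw _ h)
  have hja : j ≠ a := by rintro rfl; exact hndvd dvd_rfl
  obtain ⟨t, ht0, hlt⟩ := Int.exists_add_two_mul_natAbs_lt ha0 hndvd
  have hj : (transvection hja (2 * t) • w) j = w j + 2 * t * w a := by
    simp [transvection_smul]
  refine ⟨_, ⟨transvection_two_mul_mem_reductionGroup hja t,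
    transvection_mem_unitColumns hja _ has⟩, ?_⟩
  calc minNatAbsOn sᶜ (transvection hja (2 * t) • w)
      ≤ ((transvection hja (2 * t) • w) j).natAbs := Nat.sInf_le ⟨j, ⟨hjs, hj ▸ ht0⟩, rfl⟩
    _ < (w a).natAbs := hj ▸ hlt
    _ = minNatAbsOn sᶜ w := hmin

lemma exists_smul_isUnit_apply_of_isPrimitiveOn {v : Fin p → ℤ} (hv : IsPrimitiveOn sᶜ v) :
    ∃ g ∈ reductionGroup p ⊓ unitColumns s, ∃ a ∉ s, IsUnit ((g • v) a) := by
  obtain ⟨g, hg, -, hQ⟩ := (reductionGroup p ⊓ unitColumns s).exists_smul_of_descent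
    (IsPrimitiveOn sᶜ) (fun w => ∃ a ∉ s, IsUnit (w a)) (minNatAbsOn sᶜ)
    (fun w hw hnot => by
      push Not at hnot
      obtain ⟨g, hg, hlt⟩ := exists_smul_minNatAbsOn_lt hw hnot
      exact ⟨g, hg, hw.smul hg.2, hlt⟩) v hv
  exact ⟨g, hg, hQ⟩

lemma exists_smul_isUnit_apply_self {v : Fin p → ℤ} (hv : IsPrimitiveOn sᶜ v) {κ : Fin p}
    (hκ : κ ∉ s) : ∃ g ∈ reductionGroup p ⊓ unitColumns s, IsUnit ((g • v) κ) := by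
  obtain ⟨g, hg, a, has, ha⟩ := exists_smul_isUnit_apply_of_isPrimitiveOn hv
  by_cases haκ : a = κ
  · exact ⟨g, hg, haκ ▸ ha⟩
  have hκa : κ ≠ a := Ne.symm haκ
  have hpivot : (Qm p κ a hκa • g • v) κ = -(g • v) a := by
    simp [Qm_smul, haκ]; ring
  refine ⟨Qm p κ a hκa * g,
    mul_mem ⟨Qm_mem_reductionGroup hκa, Qm_mem_unitColumns hκa hκ has⟩ hg, ?_⟩
  rw [mul_smul, hpivot]
  exact ha.neg

lemma exists_smul_sum_parityWeight_lt_of_even {w : Fin p → ℤ} {κ : Fin p} (hκ : κ ∉ s)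
    (hwκ : IsUnit (w κ)) {i : Fin p} (hiκ : i ≠ κ) (hi : w i ≠ 0) (hi_even : Even (w i)) :
    ∃ g ∈ reductionGroup p ⊓ unitColumns s, (g • w) κ = w κ ∧
      ∑ r, parityWeight ((g • w) r) < ∑ r, parityWeight (w r) := by
  obtain ⟨m, hm⟩ := hi_even
  -- `w κ = ±1` is its own inverse
  set g := transvection hiκ (2 * (-m * w κ))
  have hgw : g • w = Function.update w i 0 := by
    ext r
    rcases eq_or_ne r i with rfl | hr
    · simp [g, transvection_smul]
      linear_combination hm - 2 * m * Int.isUnit_mul_self hwκ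
    · simp [g, transvection_smul, hr]
  refine ⟨g, ⟨transvection_two_mul_mem_reductionGroup hiκ _,
    transvection_mem_unitColumns hiκ _ hκ⟩, by simp [hgw, hiκ.symm], ?_⟩
  refine Finset.sum_lt_sum (fun r _ => ?_) ⟨i, Finset.mem_univ _, ?_⟩
  · rw [hgw, Function.update_apply]
    split_ifs <;> simp [parityWeight_zero]
  · simpa [hgw, parityWeight_zero] using parityWeight_pos hi

lemma exists_smul_sum_parityWeight_lt_of_odd {w : Fin p → ℤ} {κ : Fin p} (hκ : κ ∉ s)
    (hwκ : IsUnit (w κ)) (hodd : Odd (∑ r, w r)) {i : Fin p} (hiκ : i ≠ κ)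
    (hi_odd : Odd (w i)) :
    ∃ g ∈ reductionGroup p ⊓ unitColumns s, (g • w) κ = w κ ∧
      ∑ r, parityWeight ((g • w) r) < ∑ r, parityWeight (w r) := by
  have hκ_odd : Odd (w κ) := by
    rcases Int.isUnit_iff.1 hwκ with h | h <;> rw [h] <;> decide
  obtain ⟨j, hji, hjκ, hj_odd⟩ := Int.exists_odd_apply_of_odd_sum hodd hiκ hi_odd hκ_odd
  set g := Rm p i κ hiκ * Rm p j κ hjκ
  have hgw (r : Fin p) :
      (g • w) r = w r + (if r = i then w κ else 0) + (if r = j then w κ else 0) := by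
    simp [g, Rm_mul_Rm_smul, Pi.single_apply]
  have hlt {x : Fin p} (hx : Odd (w x)) : parityWeight (w x + w κ) < parityWeight (w x) :=
    parityWeight_lt_of_even_of_odd (hx.add_odd hκ_odd) hx
  refine ⟨g, ⟨Rm_mul_Rm_mem_reductionGroup hji.symm hiκ hjκ,
    Rm_mul_Rm_mem_unitColumns hiκ hjκ hκ⟩, by simp [hgw, hiκ.symm, hjκ.symm], ?_⟩
  refine Finset.sum_lt_sum (fun r _ => ?_)
    ⟨i, Finset.mem_univ _, by simpa [hgw, hji.symm] using hlt hi_odd⟩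
  rw [hgw]
  split_ifs with hri hrj hrj
  · exact absurd (hri.symm.trans hrj) hji.symm
  · subst hri; simpa using (hlt hi_odd).le
  · subst hrj; simpa using (hlt hj_odd).le
  · simp

lemma exists_smul_eq_single_of_isUnit_apply {v : Fin p → ℤ} {κ : Fin p} (hκ : κ ∉ s)
    (hvκ : IsUnit (v κ)) (hodd : Odd (∑ i, v i)) :
    ∃ g ∈ reductionGroup p ⊓ unitColumns s, g • v = Pi.single κ (v κ) := by
  obtain ⟨g, hg, ⟨hgκ, -⟩, hzero⟩ := (reductionGroup p ⊓ unitColumns s).exists_smul_of_descent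
    (fun w => w κ = v κ ∧ Odd (∑ i, w i)) (fun w => ∀ i ≠ κ, w i = 0)
    (fun w => ∑ r, parityWeight (w r))
    (fun w ⟨hwκ, hwodd⟩ hnot => by
      push Not at hnot
      obtain ⟨i, hiκ, hi⟩ := hnot
      obtain ⟨g, hg, hgκ, hlt⟩ := (Int.even_or_odd (w i)).elim
        (exists_smul_sum_parityWeight_lt_of_even hκ (hwκ ▸ hvκ) hiκ hi)
        (exists_smul_sum_parityWeight_lt_of_odd hκ (hwκ ▸ hvκ) hwodd hiκ)
      exact ⟨g, hg, ⟨hgκ.trans hwκ, odd_sum_smul_of_mem_sumParityStabilizer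
        (reductionGroup_le_sumParityStabilizer hg.1) hwodd⟩, hlt⟩) v ⟨rfl, hodd⟩
  refine ⟨g, hg, funext fun i => ?_⟩
  rcases eq_or_ne i κ with rfl | hi
  · simp [hgκ]
  · simp [hzero i hi, hi]

lemma exists_mul_mem_unitColumns_insert {M : Matrix.SpecialLinearGroup (Fin p) ℤ}
    (hM : M ∈ unitColumns s) {κ : Fin p} (hκ : κ ∉ s)
    (hodd : Odd (∑ i, (M • Pi.single κ 1 : Fin p → ℤ) i)) :
    ∃ g ∈ reductionGroup p, g * M ∈ unitColumns (insert κ s) := by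
  obtain ⟨g₁, hg₁, hunit⟩ :=
    exists_smul_isUnit_apply_self ((isPrimitiveOn_compl_single hκ).smul hM) hκ
  obtain ⟨g₂, hg₂, hsingle⟩ := exists_smul_eq_single_of_isUnit_apply hκ hunit
    (odd_sum_smul_of_mem_sumParityStabilizer (reductionGroup_le_sumParityStabilizer hg₁.1) hodd)
  refine ⟨g₂ * g₁, mul_mem hg₂.1 hg₁.1, ?_⟩
  rintro c (rfl | hc)
  · refine ⟨hunit.unit, ?_⟩
    rw [mul_smul, mul_smul, hsingle, IsUnit.unit_spec, ← Pi.single_smul, smul_eq_mul, mul_one]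
  · exact mul_mem (mul_mem hg₂.2 hg₁.2) hM c hc

end ColumnReduction

lemma exists_mul_mem_unitColumns {U : Matrix.SpecialLinearGroup (Fin p) ℤ}
    (hU : ∀ j, Odd (∑ i, U i j)) (s : Finset (Fin p)) :
    ∃ K ∈ reductionGroup p, K * U ∈ unitColumns (s : Set (Fin p)) := by
  induction s using Finset.induction_on with
  | empty => exact ⟨1, one_mem _, fun c hc => by simp at hc⟩
  | insert κ s hκ ih =>
    obtain ⟨K, hK, hKU⟩ := ih
    have hodd : Odd (∑ i, ((K * U) • Pi.single κ 1 : Fin p → ℤ) i) := by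
      rw [mul_smul]
      refine odd_sum_smul_of_mem_sumParityStabilizer (reductionGroup_le_sumParityStabilizer hK) ?_
      simpa [smul_single_one_apply] using hU κ
    obtain ⟨g, hg, hgKU⟩ := exists_mul_mem_unitColumns_insert hKU (by simpa using hκ) hodd
    exact ⟨g * K, mul_mem hg hK, by rw [mul_assoc, Finset.coe_insert]; exact hgKU⟩

theorem statement2_general (p : ℕ) (U : Matrix.SpecialLinearGroup (Fin p) ℤ)
    (hU : ∀ j : Fin p, Odd (∑ i : Fin p, (U : Matrix (Fin p) (Fin p) ℤ) i j)) :
    ∃ K D : Matrix.SpecialLinearGroup (Fin p) ℤ,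
      K ∈ Subgroup.closure
        ({A | ∃ (i j : Fin p) (h : i ≠ j), A = Rm p i j h ^ 2 ∨ A = Qm p i j h} ∪
         {A | ∃ (i j k : Fin p) (hik : i ≠ k) (hjk : j ≠ k),
            i ≠ j ∧ A = Rm p i k hik * Rm p j k hjk}) ∧
      (∀ i j : Fin p, i ≠ j → (D : Matrix (Fin p) (Fin p) ℤ) i j = 0) ∧
      (∀ i : Fin p, (D : Matrix (Fin p) (Fin p) ℤ) i i = 1 ∨
        (D : Matrix (Fin p) (Fin p) ℤ) i i = -1) ∧
      U = K * D := by
  obtain ⟨K, hK, hD⟩ := exists_mul_mem_unitColumns hU Finset.univ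
  refine ⟨K⁻¹, K * U, inv_mem hK, fun i j hij => ?_, fun i => ?_, by group⟩
  · exact apply_eq_zero_of_mem_unitColumns hD (by simp) hij
  · exact Int.isUnit_iff.1 (isUnit_apply_self_of_mem_unitColumns hD (by simp))

/-- Every `U ∈ SL(p,ℤ)` with all column sums odd can be written as `U = K * D`, where `K`
lies in the subgroup generated by the `R_{ij}²` (`i ≠ j`), the `Q_{ij}` (`i ≠ j`), and the
`R_{ik} R_{jk}` (`i, j, k` mutually distinct), and `D` is diagonal with all diagonal
entries `±1`. -/
theorem statement2 (p : ℕ) (hp : 2 ≤ p) (U : Matrix.SpecialLinearGroup (Fin p) ℤ)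
    (hU : ∀ j : Fin p, Odd (∑ i : Fin p, (U : Matrix (Fin p) (Fin p) ℤ) i j)) :
    ∃ K D : Matrix.SpecialLinearGroup (Fin p) ℤ,
      K ∈ Subgroup.closure
        ({A | ∃ (i j : Fin p) (h : i ≠ j), A = Rm p i j h ^ 2 ∨ A = Qm p i j h} ∪
         {A | ∃ (i j k : Fin p) (hik : i ≠ k) (hjk : j ≠ k),
            i ≠ j ∧ A = Rm p i k hik * Rm p j k hjk}) ∧
      (∀ i j : Fin p, i ≠ j → (D : Matrix (Fin p) (Fin p) ℤ) i j = 0) ∧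
      (∀ i : Fin p, (D : Matrix (Fin p) (Fin p) ℤ) i i = 1 ∨
        (D : Matrix (Fin p) (Fin p) ℤ) i i = -1) ∧
      U = K * D :=
  statement2_general p U hU
end

section
/- Let p ≥ 1. The right action of SL(p,ℤ) on the set of nonzero row vectors of (ℤ/2)^p via mod 2 reduction is transitive: for any nonzero row vectors v, w ∈ (ℤ/2)^p there exists U ∈ SL(p,ℤ) such that v·Ū = w, where Ū denotes the entrywise mod 2 reduction of U and v·Ū denotes row-vector-times-matrix multiplication over ℤ/2. -/
/-!
Over a field, any linear isomorphism between the lines spanned by two nonzero vectors extends to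
an automorphism of the whole space, so `GL(p, ℤ/2)` is transitive on nonzero vectors. Over `ℤ/2`
every invertible matrix has determinant `1` and is a product of transvections, and each
transvection `1 + c • Eᵢⱼ` lifts to an integral transvection in `SL(p, ℤ)`.
-/

open Matrix

theorem Matrix.exists_isUnit_det_vecMul_eq {K n : Type*} [Field K] [Fintype n] [DecidableEq n]
    {v w : n → K} (hv : v ≠ 0) (hw : w ≠ 0) :
    ∃ M : Matrix n n K, IsUnit M.det ∧ v ᵥ* M = w := by
  let f := LinearEquiv.coord K _ v hv ≪≫ₗ LinearEquiv.toSpanNonzeroSingleton K _ w hw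
  obtain ⟨g, hg⟩ := Submodule.exists_linearEquiv_restrict_eq f
  refine ⟨(LinearMap.toMatrix' g.toLinearMap)ᵀ, ?_, ?_⟩
  · rw [det_transpose, LinearMap.det_toMatrix']
    exact LinearEquiv.isUnit_det' g
  · have hfv : (f ⟨v, Submodule.mem_span_singleton_self v⟩ : n → K) = w := by
      simp [f, LinearEquiv.coord_self]
    rw [vecMul_transpose, LinearMap.toMatrix'_mulVec, LinearEquiv.coe_coe, ← hfv, hg]

namespace Matrix.SpecialLinearGroup

variable {n : Type*} [Fintype n] [DecidableEq n]

theorem exists_mapMatrix_intCast_eq_transvection (m : ℕ) {i j : n} (hij : i ≠ j)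
    (c : ZMod m) :
    ∃ U : SpecialLinearGroup n ℤ,
      (Int.castRingHom (ZMod m)).mapMatrix U = Matrix.transvection i j c := by
  obtain ⟨k, rfl⟩ := ZMod.intCast_surjective c
  refine ⟨⟨Matrix.transvection i j k, det_transvection_of_ne i j hij k⟩, ?_⟩
  unfold Matrix.transvection
  rw [map_add, map_one, RingHom.mapMatrix_apply, map_single, eq_intCast]

theorem exists_mapMatrix_intCast_eq_of_det_ne_zero {M : Matrix n n (ZMod 2)} (hM : M.det ≠ 0) :
    ∃ U : SpecialLinearGroup n ℤ, (Int.castRingHom (ZMod 2)).mapMatrix U = M := by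
  refine diagonal_transvection_induction_of_det_ne_zero
    (fun N ↦ ∃ U : SpecialLinearGroup n ℤ, (Int.castRingHom (ZMod 2)).mapMatrix U = N) M hM
    ?_ ?_ ?_
  · intro D hD
    have hD_eq_one : D = 1 := by
      funext i
      have hDi := Finset.prod_ne_zero_iff.mp (det_diagonal (d := D) ▸ hD) i (Finset.mem_univ i)
      exact (by decide : ∀ x : ZMod 2, x ≠ 0 → x = 1) _ hDi
    exact ⟨1, by simp [hD_eq_one]⟩
  · intro t
    exact exists_mapMatrix_intCast_eq_transvection 2 t.hij t.c
  · rintro A B - - ⟨U, rfl⟩ ⟨V, rfl⟩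
    exact ⟨U * V, by rw [coe_mul, map_mul]⟩

end Matrix.SpecialLinearGroup

theorem statement6_general (p : ℕ) (v w : Fin p → ZMod 2) (hv : v ≠ 0) (hw : w ≠ 0) :
    ∃ U : Matrix.SpecialLinearGroup (Fin p) ℤ,
      Matrix.vecMul v ((U : Matrix (Fin p) (Fin p) ℤ).map (Int.cast : ℤ → ZMod 2)) = w := by
  obtain ⟨M, hM, hvM⟩ := exists_isUnit_det_vecMul_eq hv hw
  obtain ⟨U, hU⟩ := SpecialLinearGroup.exists_mapMatrix_intCast_eq_of_det_ne_zero hM.ne_zero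
  exact ⟨U, by rw [← hvM, ← hU]; rfl⟩

/-- The right action of `SL(p,ℤ)` on nonzero row vectors of `(ℤ/2)^p` via entrywise mod `2`
reduction is transitive: for any nonzero row vectors `v, w` there is `U ∈ SL(p,ℤ)` with
`v · Ū = w`. -/
theorem statement6 (p : ℕ) (hp : 1 ≤ p) (v w : Fin p → ZMod 2) (hv : v ≠ 0) (hw : w ≠ 0) :
    ∃ U : Matrix.SpecialLinearGroup (Fin p) ℤ,
      Matrix.vecMul v ((U : Matrix (Fin p) (Fin p) ℤ).map (Int.cast : ℤ → ZMod 2)) = w :=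
  statement6_general p v w hv hw
end

section
/- Let p ≥ 1. The set H = {U ∈ SL(p,ℤ) : for every column index j, the sum ∑_{i=1}^p U_{ij} is odd} is a subgroup of SL(p,ℤ), and its index in SL(p,ℤ) equals 2^p − 1. (H is exactly the stabilizer of the all-ones row vector (1, …, 1) ∈ (ℤ/2)^p under the right action of SL(p,ℤ) by mod 2 reduction.) -/
/-!
Let `SL(n, ℤ)` act on row vectors over `ZMod 2` on the right through reduction mod 2. The column
sums of `U` are the entries of `1 ᵥ* U`, so `H` is the stabilizer of the all-ones vector and its
index is the size of the orbit of that vector. The orbit is everything except `0`: a nonzero `v`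
with `v k = 1` is reached by the transvection `1 + e_k wᵀ`, where `w` lifts `1 + v` and `w k = 0`.
Hence the index is `2 ^ n - 1`.
-/

open Matrix

namespace Matrix.SpecialLinearGroup

variable {n : Type*} [Fintype n] [DecidableEq n] {R S : Type*} [CommRing R] [CommRing S]

def oneAddVecMulVec (u w : n → R) (h : w ⬝ᵥ u = 0) : SpecialLinearGroup n R :=
  ⟨1 + vecMulVec u w, by rw [vecMulVec_eq Unit, det_one_add_replicateCol_mul_replicateRow, h,
    add_zero]⟩

lemma vecMul_oneAddVecMulVec (x u w : n → R) (h : w ⬝ᵥ u = 0) :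
    x ᵥ* (oneAddVecMulVec u w h : Matrix n n R) = x + (x ⬝ᵥ u) • w := by
  rw [oneAddVecMulVec, vecMul_add, vecMul_one, vecMul_vecMulVec]

lemma map_oneAddVecMulVec (f : R →+* S) (u w : n → R) (h : w ⬝ᵥ u = 0) :
    map f (oneAddVecMulVec u w h) =
      oneAddVecMulVec (f ∘ u) (f ∘ w) (by rw [← RingHom.map_dotProduct, h, map_zero]) := by
  ext i j
  rw [map_apply_coe]
  simp [oneAddVecMulVec, vecMulVec_apply, one_apply, apply_ite f]

variable (n R)

/-- Not an instance: for `R = ℤ` it would clash with the action of `SL(n, ℤ)` on `n → ℤ` by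
`mulVec`. -/
abbrev vecMulAction : DistribMulAction (SpecialLinearGroup n ℤ) (n → R) where
  smul U v := v ᵥ* (map (Int.castRingHom R) U⁻¹ : Matrix n n R)
  one_smul v := by
    show v ᵥ* _ = v
    simp
  mul_smul U V v := by
    show v ᵥ* _ = (v ᵥ* _) ᵥ* _
    simp [vecMul_vecMul]
  smul_zero U := zero_vecMul _
  smul_add U v w := add_vecMul _ _ _

attribute [local instance] vecMulAction

variable {n R}

lemma inv_smul_eq_vecMul (U : SpecialLinearGroup n ℤ) (v : n → R) :
    U⁻¹ • v = v ᵥ* (map (Int.castRingHom R) U : Matrix n n R) := by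
  show v ᵥ* _ = _
  rw [inv_inv]

lemma mem_stabilizer_iff_vecMul_eq (U : SpecialLinearGroup n ℤ) (v : n → R) :
    U ∈ MulAction.stabilizer (SpecialLinearGroup n ℤ) v ↔
      v ᵥ* (map (Int.castRingHom R) U : Matrix n n R) = v := by
  rw [← inv_smul_eq_vecMul, ← Subgroup.inv_mem_iff, MulAction.mem_stabilizer_iff]

lemma mem_orbit_iff_exists_vecMul_eq (v w : n → R) :
    w ∈ MulAction.orbit (SpecialLinearGroup n ℤ) v ↔
      ∃ U : SpecialLinearGroup n ℤ, v ᵥ* (map (Int.castRingHom R) U : Matrix n n R) = w := by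
  simp only [MulAction.mem_orbit_iff, ← inv_smul_eq_vecMul]
  exact (Equiv.inv _).exists_congr_left.trans (by simp)

lemma one_vecMul_map_zmod_two_eq_one_iff (U : SpecialLinearGroup n ℤ) :
    (1 : n → ZMod 2) ᵥ* (map (Int.castRingHom (ZMod 2)) U : Matrix n n (ZMod 2)) = 1 ↔
      ∀ j, Odd (∑ i, (U : Matrix n n ℤ) i j) := by
  simp only [funext_iff, vecMul, dotProduct, Pi.one_apply, one_mul, map_apply_coe,
    RingHom.mapMatrix_apply, Matrix.map_apply, Int.coe_castRingHom, ← Int.cast_sum,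
    ZMod.intCast_eq_one_iff_odd]

lemma orbit_one_zmod_two [Nonempty n] :
    MulAction.orbit (SpecialLinearGroup n ℤ) (1 : n → ZMod 2) = {0}ᶜ := by
  ext v
  rw [Set.mem_compl_singleton_iff]
  constructor
  · rintro ⟨U, rfl⟩
    exact (smul_ne_zero_iff_ne U).2 one_ne_zero
  · intro hv
    obtain ⟨k, hk⟩ := Function.ne_iff.1 hv
    have hvk : v k = 1 := Fin.eq_one_of_ne_zero (v k) hk
    let w : n → ℤ := fun j => ((v j + 1).val : ℤ)
    have hw : w ⬝ᵥ Pi.single k 1 = 0 := by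
      rw [dotProduct_single, mul_one]
      simp only [w, hvk]
      rfl
    rw [mem_orbit_iff_exists_vecMul_eq]
    refine ⟨oneAddVecMulVec (Pi.single k 1) w hw, ?_⟩
    have hu : 1 ⬝ᵥ (Int.castRingHom (ZMod 2)) ∘ Pi.single k 1 = 1 := by
      simp [Function.comp_def, Pi.single_apply, apply_ite Int.cast, one_dotProduct]
    have hw' : (Int.castRingHom (ZMod 2)) ∘ w = 1 + v := by
      ext j
      simp [w, add_comm]
    rw [map_oneAddVecMulVec, vecMul_oneAddVecMulVec, hu, hw', one_smul, CharTwo.add_cancel_left]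

lemma index_stabilizer_one_zmod_two [Nonempty n] :
    (MulAction.stabilizer (SpecialLinearGroup n ℤ) (1 : n → ZMod 2)).index =
      2 ^ Fintype.card n - 1 := by
  rw [MulAction.index_stabilizer, orbit_one_zmod_two, Set.ncard_compl, Set.ncard_singleton]
  simp

lemma mem_stabilizer_one_zmod_two_iff (U : SpecialLinearGroup n ℤ) :
    U ∈ MulAction.stabilizer (SpecialLinearGroup n ℤ) (1 : n → ZMod 2) ↔
      ∀ j, Odd (∑ i, (U : Matrix n n ℤ) i j) := by
  rw [mem_stabilizer_iff_vecMul_eq, one_vecMul_map_zmod_two_eq_one_iff]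

end Matrix.SpecialLinearGroup

/-- The set of matrices in `SL(p,ℤ)` with all column sums odd is a subgroup, of index
exactly `2^p − 1`. -/
theorem statement7 (p : ℕ) (hp : 1 ≤ p) :
    ∃ H : Subgroup (Matrix.SpecialLinearGroup (Fin p) ℤ),
      (∀ U : Matrix.SpecialLinearGroup (Fin p) ℤ,
        U ∈ H ↔ ∀ j : Fin p, Odd (∑ i : Fin p, (U : Matrix (Fin p) (Fin p) ℤ) i j)) ∧
      H.index = 2 ^ p - 1 := by
  let := SpecialLinearGroup.vecMulAction (Fin p) (ZMod 2)
  have : Nonempty (Fin p) := ⟨⟨0, hp⟩⟩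
  refine ⟨MulAction.stabilizer _ (1 : Fin p → ZMod 2),
    SpecialLinearGroup.mem_stabilizer_one_zmod_two_iff, ?_⟩
  rw [SpecialLinearGroup.index_stabilizer_one_zmod_two, Fintype.card_fin]
end

section
/- Let δ ≥ 2 be an integer. The map b_δ : S¹ × D̄² → S¹ × ℂ defined by b_δ(u, z) = (u^δ, (1/2)·u + (1/δ²)·u^{1−δ}·z), where S¹ ⊂ ℂ is the unit circle and D̄² ⊂ ℂ is the closed unit disk, is injective, and its image is contained in S¹ × {w ∈ ℂ : |w| < 1} (in fact |(1/2)·u + (1/δ²)·u^{1−δ}·z| ≤ 1/2 + 1/δ² < 1 for all u ∈ S¹ and z ∈ D̄²). Thus b_δ embeds the solid torus S¹ × D̄² into its own interior as a thickened closed braid (a (δ,1)-cable) with winding number δ. -/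
/-!
If `u₁ ≠ u₂` lie on the unit circle and `u₁ ^ δ = u₂ ^ δ`, then `ζ = u₁ / u₂` is a nontrivial
`δ`-th root of unity, so `δ = ∑_{k<δ} (1 - ζ ^ k)`; with `‖1 - ζ ^ k‖ ≤ k ‖1 - ζ‖` this gives
`‖u₁ - u₂‖ ≥ 2 / (δ - 1)`. Equal second coordinates, on the other hand, force
`‖u₁ - u₂‖ ≤ 4 / δ²`, and `4 (δ - 1) < 2 δ²`. Once `u₁ = u₂`, the disk coordinate is recovered
by cancelling the nonzero factor `u₁ ^ (1 - δ) / δ²`.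
-/

open Metric Finset

theorem norm_pow_sub_one_le {R : Type*} [SeminormedRing R] [NormOneClass R] {x : R}
    (hx : ‖x‖ ≤ 1) (k : ℕ) : ‖x ^ k - 1‖ ≤ k * ‖x - 1‖ := by
  induction k with
  | zero => simp
  | succ k ih =>
    have hxk : ‖x ^ k‖ ≤ 1 := (norm_pow_le x k).trans (pow_le_one₀ (norm_nonneg x) hx)
    calc ‖x ^ (k + 1) - 1‖ = ‖x ^ k * (x - 1) + (x ^ k - 1)‖ := by congr 1; noncomm_ring
      _ ≤ ‖x ^ k‖ * ‖x - 1‖ + k * ‖x - 1‖ :=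
          (norm_add_le _ _).trans (add_le_add (norm_mul_le _ _) ih)
      _ ≤ (k + 1 : ℕ) * ‖x - 1‖ := by push_cast; nlinarith [norm_nonneg (x - 1)]

theorem sum_range_natCast_mul_two (n : ℕ) : (∑ k ∈ range n, (k : ℝ)) * 2 = n * (n - 1) := by
  induction n with
  | zero => simp
  | succ n ih => rw [sum_range_succ]; push_cast; linarith

theorem two_le_mul_norm_sub_one_of_pow_eq_one {𝕜 : Type*} [RCLike 𝕜] {ζ : 𝕜} {n : ℕ}
    (hn : n ≠ 0) (h : ζ ^ n = 1) (hζ : ζ ≠ 1) : 2 ≤ ((n : ℝ) - 1) * ‖ζ - 1‖ := by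
  have hsum : ∑ k ∈ range n, ζ ^ k = 0 := by rw [geom_sum_eq hζ, h, sub_self, zero_div]
  have hnorm : ‖ζ‖ ≤ 1 :=
    ((pow_eq_one_iff_of_nonneg (norm_nonneg ζ) hn).1 (by rw [← norm_pow, h, norm_one])).le
  have hsub : (n : ℝ) * 2 ≤ n * (((n : ℝ) - 1) * ‖ζ - 1‖) :=
    calc (n : ℝ) * 2 = ‖∑ k ∈ range n, (1 - ζ ^ k)‖ * 2 := by
          rw [sum_sub_distrib, hsum, sub_zero]; simp
      _ ≤ (∑ k ∈ range n, ‖ζ ^ k - 1‖) * 2 := by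
          gcongr; exact (norm_sum_le _ _).trans_eq (sum_congr rfl fun _ _ => norm_sub_rev _ _)
      _ ≤ (∑ k ∈ range n, (k : ℝ) * ‖ζ - 1‖) * 2 := by
          gcongr with k; exact norm_pow_sub_one_le hnorm k
      _ = n * (((n : ℝ) - 1) * ‖ζ - 1‖) := by
          rw [← sum_mul, mul_right_comm, sum_range_natCast_mul_two]; ring
  exact le_of_mul_le_mul_left hsub (by positivity)

theorem Complex.two_le_mul_norm_sub_of_pow_eq_pow {u v : ℂ} {n : ℕ} (hn : n ≠ 0) (hv : ‖v‖ = 1)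
    (h : u ^ n = v ^ n) (huv : u ≠ v) : 2 ≤ ((n : ℝ) - 1) * ‖u - v‖ := by
  have hv0 : v ≠ 0 := norm_ne_zero_iff.1 (by rw [hv]; exact one_ne_zero)
  have key := two_le_mul_norm_sub_one_of_pow_eq_one hn (ζ := u / v)
    (by rw [div_pow, h, div_self (pow_ne_zero n hv0)])
    (fun h1 => huv ((div_eq_one_iff_eq hv0).1 h1))
  rwa [div_sub_one hv0, norm_div, hv, div_one] at key

section Cable

variable {m : ℤ} {c u z : ℂ}

theorem norm_mul_zpow_mul_le (hu : ‖u‖ = 1) (hz : ‖z‖ ≤ 1) : ‖c * u ^ m * z‖ ≤ ‖c‖ := by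
  rw [norm_mul, norm_mul, norm_zpow, hu, one_zpow, mul_one]
  exact mul_le_of_le_one_right (norm_nonneg c) hz

theorem norm_half_mul_add_mul_zpow_mul_le (hu : ‖u‖ = 1) (hz : ‖z‖ ≤ 1) :
    ‖(1 / 2 : ℂ) * u + c * u ^ m * z‖ ≤ 1 / 2 + ‖c‖ := by
  refine (norm_add_le _ _).trans (add_le_add ?_ (norm_mul_zpow_mul_le hu hz))
  rw [norm_mul, hu, mul_one]; norm_num

theorem injOn_cable {n : ℕ} (hn : n ≠ 0) (hc0 : c ≠ 0) (hc : 2 * ((n : ℝ) - 1) * ‖c‖ < 1) :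
    Set.InjOn (fun uz : ℂ × ℂ => (uz.1 ^ n, (1 / 2 : ℂ) * uz.1 + c * uz.1 ^ m * uz.2))
      (sphere (0 : ℂ) 1 ×ˢ closedBall (0 : ℂ) 1) := by
  rintro ⟨u₁, z₁⟩ ⟨hu₁, hz₁⟩ ⟨u₂, z₂⟩ ⟨hu₂, hz₂⟩ heq
  simp only [mem_sphere_zero_iff_norm, mem_closedBall_zero_iff] at hu₁ hz₁ hu₂ hz₂
  obtain ⟨hpow, hsnd⟩ := Prod.mk.inj heq
  have hclose : ‖u₁ - u₂‖ ≤ 4 * ‖c‖ := by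
    have hdiff : u₁ - u₂ = 2 * (c * u₂ ^ m * z₂ - c * u₁ ^ m * z₁) := by
      linear_combination 2 * hsnd
    rw [hdiff, norm_mul, Complex.norm_two]
    linarith [norm_sub_le (c * u₂ ^ m * z₂) (c * u₁ ^ m * z₁),
      norm_mul_zpow_mul_le (c := c) (m := m) hu₁ hz₁,
      norm_mul_zpow_mul_le (c := c) (m := m) hu₂ hz₂]
  obtain rfl : u₁ = u₂ := by
    by_contra hne
    have hfar := Complex.two_le_mul_norm_sub_of_pow_eq_pow hn hu₂ hpow hne
    have hn1 : (0 : ℝ) ≤ n - 1 := sub_nonneg.2 (Nat.one_le_cast.2 (Nat.pos_of_ne_zero hn))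
    nlinarith [mul_le_mul_of_nonneg_left hclose hn1]
  have hu0 : u₁ ≠ 0 := norm_ne_zero_iff.1 (by rw [hu₁]; exact one_ne_zero)
  have hz : z₁ = z₂ :=
    mul_left_cancel₀ (mul_ne_zero hc0 (zpow_ne_zero m hu0)) (by linear_combination hsnd)
  rw [hz]

end Cable

/-- For an integer `δ ≥ 2`, the map `b_δ(u, z) = (u^δ, (1/2)u + (1/δ²)u^{1−δ}z)` is
injective on the solid torus `S¹ × D̄²`, satisfies the bound
`‖(1/2)u + (1/δ²)u^{1−δ}z‖ ≤ 1/2 + 1/δ² < 1`, and hence maps `S¹ × D̄²` into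
`S¹ × {w : ‖w‖ < 1}`. -/
theorem statement8 (δ : ℤ) (hδ : 2 ≤ δ) :
    Set.InjOn
      (fun uz : ℂ × ℂ =>
        (uz.1 ^ δ, (1 / 2 : ℂ) * uz.1 + (1 / (δ : ℂ) ^ 2) * uz.1 ^ (1 - δ) * uz.2))
      (sphere (0 : ℂ) 1 ×ˢ closedBall (0 : ℂ) 1) ∧
    (∀ u ∈ sphere (0 : ℂ) 1, ∀ z ∈ closedBall (0 : ℂ) 1,
      ‖(1 / 2 : ℂ) * u + (1 / (δ : ℂ) ^ 2) * u ^ (1 - δ) * z‖ ≤ 1 / 2 + 1 / (δ : ℝ) ^ 2) ∧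
    (1 / 2 + 1 / (δ : ℝ) ^ 2 < 1) ∧
    (∀ uz ∈ sphere (0 : ℂ) 1 ×ˢ closedBall (0 : ℂ) 1,
      (uz.1 ^ δ, (1 / 2 : ℂ) * uz.1 + (1 / (δ : ℂ) ^ 2) * uz.1 ^ (1 - δ) * uz.2) ∈
        sphere (0 : ℂ) 1 ×ˢ ball (0 : ℂ) 1) := by
  lift δ to ℕ using by omega
  have hδR : (2 : ℝ) ≤ δ := by exact_mod_cast hδ
  have hc : ‖1 / (δ : ℂ) ^ 2‖ = 1 / (δ : ℝ) ^ 2 := by simp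
  simp only [Int.cast_natCast, zpow_natCast]
  have hbound : ∀ u ∈ sphere (0 : ℂ) 1, ∀ z ∈ closedBall (0 : ℂ) 1,
      ‖(1 / 2 : ℂ) * u + (1 / (δ : ℂ) ^ 2) * u ^ (1 - (δ : ℤ)) * z‖ ≤ 1 / 2 + 1 / (δ : ℝ) ^ 2 :=
    fun u hu z hz => hc ▸ norm_half_mul_add_mul_zpow_mul_le (mem_sphere_zero_iff_norm.1 hu)
      (mem_closedBall_zero_iff.1 hz)
  have hlt : 1 / 2 + 1 / (δ : ℝ) ^ 2 < 1 := by
    rw [← sub_pos]; field_simp; nlinarith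
  have hc0 : 1 / (δ : ℂ) ^ 2 ≠ 0 := one_div_ne_zero (pow_ne_zero 2 (Nat.cast_ne_zero.2 (by omega)))
  refine ⟨injOn_cable (by omega) hc0 ?_, hbound, hlt, ?_⟩
  · rw [hc]; field_simp; nlinarith
  · rintro ⟨u, z⟩ ⟨hu, hz⟩
    refine ⟨?_, mem_ball_zero_iff.2 ((hbound u hu z hz).trans_lt hlt)⟩
    rw [mem_sphere_zero_iff_norm, norm_pow, mem_sphere_zero_iff_norm.1 hu, one_pow]
end

section
/- The continuous loop g : S¹ → O(3) defined by g(u) = the 3×3 real matrix [[Re(u²), −Im(u²), 0], [Im(u²), Re(u²), 0], [0, 0, 1]] (the rotation about the third coordinate axis by twice the argument of u), which indeed takes values in the orthogonal group O(3), is null-homotopic: g is homotopic, through continuous maps from S¹ to O(3), to a constant map. -/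
open Metric Matrix

/-!
Writing `A u` for the rotation about the third axis by `arg u`, the loop is `g u = A u * A u`.
The half-turn about the first axis conjugates `A u` to `A (conj u) = (A u)⁻¹`; conjugating
the first factor by the rotations about the first axis from angle `0` to `π` therefore deforms
`g u` to `(A u)⁻¹ * A u = 1`, through orthogonal matrices.
-/

open ComplexConjugate

noncomputable section

def rotZ (u : ℂ) : Matrix (Fin 3) (Fin 3) ℝ :=
  !![u.re, -u.im, 0; u.im, u.re, 0; 0, 0, 1]

def rotX (θ : ℝ) : Matrix (Fin 3) (Fin 3) ℝ :=
  !![1, 0, 0; 0, Real.cos θ, -Real.sin θ; 0, Real.sin θ, Real.cos θ]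

@[fun_prop]
theorem continuous_rotZ : Continuous rotZ := by
  refine continuous_matrix fun i j => ?_
  fin_cases i <;> fin_cases j <;> simp only [rotZ] <;> simp <;> fun_prop

@[fun_prop]
theorem continuous_rotX : Continuous rotX := by
  refine continuous_matrix fun i j => ?_
  fin_cases i <;> fin_cases j <;> simp only [rotX] <;> simp <;> fun_prop

theorem rotZ_one : rotZ 1 = 1 := by
  ext i j
  fin_cases i <;> fin_cases j <;> simp [rotZ]

theorem rotZ_mul (u v : ℂ) : rotZ u * rotZ v = rotZ (u * v) := by
  ext i j
  fin_cases i <;> fin_cases j <;> simp [rotZ, Matrix.mul_apply, Fin.sum_univ_three] <;> ring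

theorem transpose_rotZ (u : ℂ) : (rotZ u)ᵀ = rotZ (conj u) := by
  ext i j
  fin_cases i <;> fin_cases j <;> simp [rotZ]

theorem rotX_zero : rotX 0 = 1 := by
  ext i j
  fin_cases i <;> fin_cases j <;> simp [rotX]

theorem rotX_add (a b : ℝ) : rotX a * rotX b = rotX (a + b) := by
  ext i j
  fin_cases i <;> fin_cases j <;>
    simp [rotX, Matrix.mul_apply, Fin.sum_univ_three, Real.cos_add, Real.sin_add] <;> ring

theorem transpose_rotX (θ : ℝ) : (rotX θ)ᵀ = rotX (-θ) := by
  ext i j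
  fin_cases i <;> fin_cases j <;> simp [rotX]

theorem rotX_pi_mul_rotZ_mul_rotX_neg_pi (u : ℂ) :
    rotX Real.pi * rotZ u * rotX (-Real.pi) = rotZ (conj u) := by
  ext i j
  fin_cases i <;> fin_cases j <;> simp [rotX, rotZ, Matrix.mul_apply, Fin.sum_univ_three]

theorem conj_mul_self_of_mem_sphere {u : ℂ} (hu : u ∈ sphere (0 : ℂ) 1) : conj u * u = 1 := by
  rw [← Complex.normSq_eq_conj_mul_self, Complex.normSq_eq_norm_sq,
    mem_sphere_zero_iff_norm.mp hu]
  norm_num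

theorem rotZ_mem_orthogonalGroup {u : ℂ} (hu : u ∈ sphere (0 : ℂ) 1) :
    rotZ u ∈ orthogonalGroup (Fin 3) ℝ := by
  rw [mem_orthogonalGroup_iff', transpose_rotZ, rotZ_mul, conj_mul_self_of_mem_sphere hu, rotZ_one]

theorem rotX_mem_orthogonalGroup (θ : ℝ) : rotX θ ∈ orthogonalGroup (Fin 3) ℝ := by
  rw [mem_orthogonalGroup_iff', transpose_rotX, rotX_add, neg_add_cancel, rotX_zero]

/-- The loop `g : S¹ → O(3)` given by rotation about the third coordinate axis by twice the
argument, `g(u) = [[Re u², −Im u², 0], [Im u², Re u², 0], [0, 0, 1]]`, indeed takes values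
in `O(3)`, and is null-homotopic through continuous maps `S¹ → O(3)`. -/
theorem statement10 :
    ∀ g : ℂ → Matrix (Fin 3) (Fin 3) ℝ,
      (g = fun u => !![(u ^ 2).re, -(u ^ 2).im, 0; (u ^ 2).im, (u ^ 2).re, 0; 0, 0, 1]) →
      Continuous g ∧
      (∀ u ∈ sphere (0 : ℂ) 1, (g u)ᵀ * g u = 1) ∧
      ∃ (H : ℝ × ℂ → Matrix (Fin 3) (Fin 3) ℝ) (M₀ : Matrix (Fin 3) (Fin 3) ℝ),
        ContinuousOn H (Set.Icc (0 : ℝ) 1 ×ˢ sphere (0 : ℂ) 1) ∧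
        (∀ t ∈ Set.Icc (0 : ℝ) 1, ∀ u ∈ sphere (0 : ℂ) 1,
          (H (t, u))ᵀ * H (t, u) = 1) ∧
        (∀ u ∈ sphere (0 : ℂ) 1, H (0, u) = g u) ∧
        (∀ u ∈ sphere (0 : ℂ) 1, H (1, u) = M₀) := by
  rintro g rfl
  have hg : ∀ u : ℂ, rotZ u * rotZ u = rotZ (u ^ 2) := fun u => by rw [rotZ_mul, sq]
  refine ⟨continuous_rotZ.comp (continuous_pow 2), fun u hu => ?_,
    fun p => rotX (Real.pi * p.1) * rotZ p.2 * rotX (-(Real.pi * p.1)) * rotZ p.2, 1,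
    Continuous.continuousOn (by fun_prop), fun t _ u hu => ?_, fun u _ => ?_, fun u hu => ?_⟩
  · rw [← mem_orthogonalGroup_iff']
    change rotZ (u ^ 2) ∈ _
    rw [← hg]
    exact mul_mem (rotZ_mem_orthogonalGroup hu) (rotZ_mem_orthogonalGroup hu)
  · rw [← mem_orthogonalGroup_iff']
    have hZ := rotZ_mem_orthogonalGroup hu
    exact mul_mem (mul_mem (mul_mem (rotX_mem_orthogonalGroup _) hZ)
      (rotX_mem_orthogonalGroup _)) hZ
  · simp only [mul_zero, neg_zero, rotX_zero, one_mul, mul_one, hg]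
    rfl
  · simp only [mul_one, rotX_pi_mul_rotZ_mul_rotX_neg_pi, rotZ_mul,
      conj_mul_self_of_mem_sphere hu, rotZ_one]

end
end

section
/- Let p ≥ 1. Every continuous map f : (S¹)^p → S¹, where S¹ ⊂ ℂ is the unit circle, is homotopic to a monomial map: there exist integers m₁, …, m_p such that f is homotopic (as a continuous map (S¹)^p → S¹) to the map (u₁, …, u_p) ↦ u₁^{m₁}·u₂^{m₂} ⋯ u_p^{m_p}. -/
/-!
Lift `f ∘ exp^p : ℝ^p → S¹` through the covering `exp : ℝ → S¹` (possible because `ℝ^p` is simply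
connected) to `F : ℝ^p → ℝ`. Translation by `2π eᵢ` changes `F` by a continuous multiple of `2π`,
hence by a constant `2π mᵢ`, so `F x - ∑ mᵢ xᵢ` is `2πℤ^p`-periodic and descends to a continuous
`h : (S¹)^p → ℝ` with `f u = exp (h u) · u^m`. Then `exp ((1 - t) h u) · u^m` is the homotopy.
-/

open Function Real

theorem exists_circleExp_lift {A : Type*} [TopologicalSpace A] [SimplyConnectedSpace A]
    [LocallyPathConnectedSpace A] (g : C(A, Circle)) :
    ∃ F : C(A, ℝ), ∀ a, Circle.exp (F a) = g a := by
  obtain ⟨a₀⟩ := (inferInstance : Nonempty A)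
  obtain ⟨e₀, he₀⟩ := Circle.exp_surjective (g a₀)
  obtain ⟨F, ⟨-, hF⟩, -⟩ := Circle.isCoveringMap_exp.existsUnique_continuousMap_lifts g a₀ e₀ he₀
  exact ⟨F, congr_fun hF⟩

theorem add_sub_eq_of_periodic_circleExp_comp {A : Type*} [TopologicalSpace A] [AddGroup A]
    [ContinuousAdd A] [PreconnectedSpace A] {F : A → ℝ} (hF : Continuous F) {v : A}
    (hv : Periodic (Circle.exp ∘ F) v) (x : A) :
    F (x + v) - F x = F v - F 0 := by
  have hexp (a : A) : Circle.exp (F (a + v) - F a) = 1 := by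
    rw [Circle.exp_sub, div_eq_one]
    exact hv a
  simpa using Circle.isCoveringMap_exp.const_of_comp (g := fun a => F (a + v) - F a)
    (by fun_prop) (fun a a' => by rw [hexp, hexp]) x 0

theorem ContinuousMap.homotopic_of_forall_eq_circleExp_mul {X : Type*} [TopologicalSpace X]
    {f g : C(X, Circle)} (h : C(X, ℝ)) (hfg : ∀ x, f x = Circle.exp (h x) * g x) :
    f.Homotopic g :=
  ⟨{ toFun := fun q => Circle.exp ((1 - q.1 : ℝ) * h q.2) * g q.2
     continuous_toFun := by fun_prop
     map_zero_left := by simp [hfg]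
     map_one_left := by simp }⟩

theorem Circle.exp_sum {ι : Type*} (s : Finset ι) (x : ι → ℝ) :
    Circle.exp (∑ i ∈ s, x i) = ∏ i ∈ s, Circle.exp (x i) :=
  map_sum Circle.expHom x s

variable {ι : Type*}

noncomputable def torusExp (ι : Type*) : C(ι → ℝ, ι → Circle) :=
  ⟨Pi.map fun _ => Circle.exp, by fun_prop⟩

theorem isOpenQuotientMap_torusExp : IsOpenQuotientMap (torusExp ι) :=
  .piMap fun _ => ⟨Circle.exp_surjective, Circle.exp.continuous, Circle.isCoveringMap_exp.isOpenMap⟩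

theorem periodic_torusExp [DecidableEq ι] (i : ι) :
    Periodic (torusExp ι) (Pi.single i (2 * π)) := by
  intro x
  ext1 j
  rcases eq_or_ne j i with rfl | hj
  · simp [torusExp]
  · simp [torusExp, hj]

theorem factorsThrough_torusExp [Fintype ι] [DecidableEq ι] {α : Type*} {G : (ι → ℝ) → α}
    (hG : ∀ i, Periodic G (Pi.single i (2 * π))) : FactorsThrough G (torusExp ι) := by
  intro x y hxy
  choose k hk using fun i => Circle.exp_eq_exp.1 (congr_fun hxy i)
  have hx : x = y + ∑ i, k i • Pi.single i (2 * π) := by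
    ext i
    simp [hk i, Finset.sum_apply, Pi.single_apply]
  rw [hx]
  exact Finset.sum_induction _ (Periodic G) (fun _ _ => Periodic.add_period)
    (periodic_with_period_zero G) (fun i _ => (hG i).zsmul (k i)) y

noncomputable def torusMonomial [Fintype ι] (m : ι → ℤ) : C(ι → Circle, Circle) :=
  ⟨fun u => ∏ i, u i ^ m i, by fun_prop⟩

theorem torusMonomial_torusExp [Fintype ι] (m : ι → ℤ) (x : ι → ℝ) :
    torusMonomial m (torusExp ι x) = Circle.exp (∑ i, m i * x i) := by
  rw [Circle.exp_sum]
  simp [torusMonomial, torusExp]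

theorem exists_eq_circleExp_mul_torusMonomial [Fintype ι] [DecidableEq ι]
    (f : C(ι → Circle, Circle)) :
    ∃ m : ι → ℤ, ∃ h : C(ι → Circle, ℝ), ∀ u, f u = Circle.exp (h u) * torusMonomial m u := by
  obtain ⟨F, hF⟩ := exists_circleExp_lift (f.comp (torusExp ι))
  have hFper (i : ι) : Periodic (Circle.exp ∘ F) (Pi.single i (2 * π)) := fun x => by
    simp only [comp_apply, hF, ContinuousMap.comp_apply]
    exact congr_arg f (periodic_torusExp i x)
  have hFjump (i : ι) : Circle.exp (F (Pi.single i (2 * π)) - F 0) = 1 := by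
    rw [Circle.exp_sub, div_eq_one]
    simpa using hFper i 0
  choose m hm using fun i => Circle.exp_eq_one.1 (hFjump i)
  let G : C(ι → ℝ, ℝ) := ⟨fun x => F x - ∑ i, m i * x i, by fun_prop⟩
  have hG (i : ι) : Periodic G (Pi.single i (2 * π)) := fun x => by
    have hshift := add_sub_eq_of_periodic_circleExp_comp F.continuous (hFper i) x
    simp only [hm, ContinuousMap.coe_mk, Pi.add_apply, Pi.single_apply, mul_add, mul_ite, mul_zero,
      Finset.sum_add_distrib, Finset.sum_ite_eq', Finset.mem_univ, ↓reduceIte, G] at hshift ⊢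
    linarith
  have hq := isOpenQuotientMap_torusExp (ι := ι).isQuotientMap
  refine ⟨m, hq.lift G (factorsThrough_torusExp hG), fun u => ?_⟩
  obtain ⟨x, rfl⟩ := isOpenQuotientMap_torusExp.surjective u
  have hGx := DFunLike.congr_fun (hq.lift_comp G (factorsThrough_torusExp hG)) x
  rw [ContinuousMap.comp_apply] at hGx
  rw [hGx, torusMonomial_torusExp, ← Circle.exp_add, ← ContinuousMap.comp_apply, ← hF]
  simp [G]

/-- Every continuous map `f : (S¹)^p → S¹` is homotopic to a monomial map
`(u₁, …, u_p) ↦ u₁^{m₁} ⋯ u_p^{m_p}` for some integers `m₁, …, m_p`. -/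
theorem statement11 (p : ℕ) (f : C(Fin p → Circle, Circle)) :
    ∃ m : Fin p → ℤ,
      f.Homotopic
        ⟨fun u : Fin p → Circle => ∏ i : Fin p, u i ^ m i, by
          exact continuous_finset_prod _ fun i _ => (continuous_apply i).zpow (m i)⟩ := by
  obtain ⟨m, h, hf⟩ := exists_eq_circleExp_mul_torusMonomial f
  exact ⟨m, ContinuousMap.homotopic_of_forall_eq_circleExp_mul h hf⟩
end
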